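/- arXiv:2601.00329 — 7 statements merged into one kernel-verified Lean document; each statement's English description precedes it below -/
import Mathlib

section
/- Let X ∈ ℝ^{T×m} have columns satisfying ‖X_j‖₂² = T for all j, with mutual coherence μ(X). Let S* ⊆ {1,…,m} with |S*| = K, let A ⊆ S* be nonempty, and suppose the vector r ∈ ℝ^T has the form r = Σ_{i∈A} α_i X_i + w, where α ∈ ℝ^A and w ∈ ℝ^T satisfies max_{1≤j≤m} (1/T)|X_jᵀ w| ≤ b for some b ≥ 0. Then the correlations c_j = (1/T) X_jᵀ r satisfy: (i) for every j ∈ A, |c_j| ≥ |α_j| − (K−1)·μ(X)·‖α‖_∞ − b; and (ii) for every j ∉ S*, |c_j| ≤ K·μ(X)·‖α‖_∞ + b. -/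
open Finset

/-- The mutual coherence `μ(X) = max_{i ≠ j} |X_iᵀ X_j| / (‖X_i‖₂ ‖X_j‖₂)` of the columns
of a matrix `X`. -/
noncomputable def mutualCoherence {T m : ℕ} (X : Matrix (Fin T) (Fin m) ℝ) : ℝ :=
  ⨆ p : {p : Fin m × Fin m // p.1 ≠ p.2},
    |∑ t, X t p.val.1 * X t p.val.2| /
      (Real.sqrt (∑ t, X t p.val.1 ^ 2) * Real.sqrt (∑ t, X t p.val.2 ^ 2))

lemma aux_tri (a b c : ℝ) : |a| - |b| - |c| ≤ |a + b + c| := by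
  have h : |a| ≤ |a + b + c| + |b| + |c| := by
    calc |a| = |(a + b + c) + (-b) + (-c)| := by congr 1; ring
      _ ≤ |(a + b + c) + (-b)| + |(-c)| := abs_add_le _ _
      _ ≤ |a + b + c| + |(-b)| + |(-c)| := by linarith [abs_add_le (a + b + c) (-b)]
      _ = |a + b + c| + |b| + |c| := by rw [abs_neg, abs_neg]
  linarith

theorem stmt2
    (T m K : ℕ) (hT : 0 < T)
    (X : Matrix (Fin T) (Fin m) ℝ)
    (hnorm : ∀ j, ∑ t, X t j ^ 2 = (T : ℝ))
    (Sstar : Finset (Fin m)) (hcard : Sstar.card = K)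
    (A : Finset (Fin m)) (hA : A ⊆ Sstar) (hAne : A.Nonempty)
    (α : Fin m → ℝ) (w r : Fin T → ℝ)
    (b : ℝ) (hb : 0 ≤ b)
    (hr : ∀ t, r t = (∑ i ∈ A, α i * X t i) + w t)
    (hw : ∀ j, (1 / (T : ℝ)) * |∑ t, X t j * w t| ≤ b) :
    (∀ j ∈ A,
      |α j| - ((K : ℝ) - 1) * mutualCoherence X * (A.sup' hAne fun i => |α i|) - b
        ≤ (1 / (T : ℝ)) * |∑ t, X t j * r t|) ∧
    (∀ j ∉ Sstar,
      (1 / (T : ℝ)) * |∑ t, X t j * r t|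
        ≤ (K : ℝ) * mutualCoherence X * (A.sup' hAne fun i => |α i|) + b) := by
  have hTpos : (0:ℝ) < T := by exact_mod_cast hT
  set μ := mutualCoherence X with hμdef
  set M := (A.sup' hAne fun i => |α i|) with hMdef
  have hμ0 : 0 ≤ μ := Real.iSup_nonneg fun p => by positivity
  have hMle : ∀ i ∈ A, |α i| ≤ M := fun i hi => Finset.le_sup' (fun i => |α i|) hi
  have hM0 : 0 ≤ M := le_trans (abs_nonneg _) (hMle _ hAne.choose_spec)
  -- bounded above
  have hbdd : BddAbove (Set.range fun p : {p : Fin m × Fin m // p.1 ≠ p.2} =>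
      |∑ t, X t p.val.1 * X t p.val.2| /
      (Real.sqrt (∑ t, X t p.val.1 ^ 2) * Real.sqrt (∑ t, X t p.val.2 ^ 2))) := by
    refine ⟨1, ?_⟩
    rintro x ⟨p, rfl⟩
    simp only [hnorm, Real.mul_self_sqrt hTpos.le]
    rw [div_le_one hTpos]
    have h2 := Finset.sum_mul_sq_le_sq_mul_sq Finset.univ (fun t => X t p.val.1)
      (fun t => X t p.val.2)
    rw [hnorm, hnorm] at h2
    calc |∑ t, X t p.val.1 * X t p.val.2|
        = Real.sqrt ((∑ t, X t p.val.1 * X t p.val.2) ^ 2) := (Real.sqrt_sq_eq_abs _).symm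
      _ ≤ Real.sqrt ((T:ℝ) * T) := Real.sqrt_le_sqrt h2
      _ = T := Real.sqrt_mul_self hTpos.le
  -- key bound
  have hkey : ∀ i j : Fin m, i ≠ j → |∑ t, X t i * X t j| ≤ μ * T := by
    intro i j hij
    have := le_ciSup hbdd ⟨(i, j), hij⟩
    simp only at this
    rw [hnorm, hnorm, Real.mul_self_sqrt hTpos.le, div_le_iff₀ hTpos] at this
    exact this.trans_eq rfl
  have hw' : ∀ j, |∑ t, X t j * w t| ≤ b * T := by
    intro j
    have := hw j
    rw [one_div, inv_mul_le_iff₀ hTpos] at this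
    linarith [this]
  -- expansion of the correlation
  have hexp : ∀ j, (∑ t, X t j * r t)
      = (∑ i ∈ A, α i * (∑ t, X t j * X t i)) + ∑ t, X t j * w t := by
    intro j
    simp only [hr, mul_add, Finset.mul_sum, Finset.sum_add_distrib]
    congr 1
    rw [Finset.sum_comm]
    exact Finset.sum_congr rfl fun i _ => Finset.sum_congr rfl fun t _ => by ring
  constructor
  · -- part (i)
    intro j hj
    have hsplit : (∑ i ∈ A, α i * (∑ t, X t j * X t i))
        = α j * T + ∑ i ∈ A.erase j, α i * (∑ t, X t j * X t i) := by
      rw [← Finset.add_sum_erase _ _ hj]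
      congr 2
      rw [← hnorm j]
      exact Finset.sum_congr rfl fun t _ => by ring
    have hrest : |∑ i ∈ A.erase j, α i * (∑ t, X t j * X t i)|
        ≤ ((K:ℝ) - 1) * (M * (μ * T)) := by
      calc |∑ i ∈ A.erase j, α i * (∑ t, X t j * X t i)|
          ≤ ∑ i ∈ A.erase j, |α i * (∑ t, X t j * X t i)| := Finset.abs_sum_le_sum_abs _ _
        _ ≤ ∑ i ∈ A.erase j, M * (μ * T) := by
            refine Finset.sum_le_sum fun i hi => ?_
            rw [abs_mul]
            have h1 : |α i| ≤ M := hMle i (Finset.mem_of_mem_erase hi)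
            have h2 : |∑ t, X t j * X t i| ≤ μ * T :=
              hkey j i (fun h => (Finset.ne_of_mem_erase hi) h.symm)
            exact mul_le_mul h1 h2 (abs_nonneg _) hM0
        _ = ((A.erase j).card : ℝ) * (M * (μ * T)) := by rw [Finset.sum_const, nsmul_eq_mul]
        _ ≤ ((K:ℝ) - 1) * (M * (μ * T)) := by
            refine mul_le_mul_of_nonneg_right ?_ (by positivity)
            rw [Finset.card_erase_of_mem hj]
            have hAcard : A.card ≤ K := hcard ▸ Finset.card_le_card hA
            have h1 : 1 ≤ A.card := Finset.card_pos.mpr hAne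
            have : ((A.card - 1 : ℕ) : ℝ) = (A.card : ℝ) - 1 := by
              push_cast [Nat.cast_sub h1]; ring
            rw [this]
            have : (A.card : ℝ) ≤ K := by exact_mod_cast hAcard
            linarith
    have habs : |α j| * T - ((K:ℝ) - 1) * (M * (μ * T)) - b * T ≤ |∑ t, X t j * r t| := by
      rw [hexp j, hsplit]
      have h1 : |α j * (T:ℝ)| = |α j| * T := by
        rw [abs_mul, abs_of_pos hTpos]
      calc |α j| * T - ((K:ℝ) - 1) * (M * (μ * T)) - b * T
          ≤ |α j * (T:ℝ)| - |∑ i ∈ A.erase j, α i * (∑ t, X t j * X t i)|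
            - |∑ t, X t j * w t| := by
            have := hw' j
            linarith [hrest, hw' j, h1.ge]
        _ ≤ |α j * (T:ℝ) + ∑ i ∈ A.erase j, α i * (∑ t, X t j * X t i) + ∑ t, X t j * w t| :=
            aux_tri _ _ _
    rw [one_div, le_inv_mul_iff₀ hTpos]
    calc (T:ℝ) * (|α j| - ((K:ℝ) - 1) * μ * M - b)
        = |α j| * T - ((K:ℝ) - 1) * (M * (μ * T)) - b * T := by ring
      _ ≤ |∑ t, X t j * r t| := habs
  · -- part (ii)
    intro j hj
    have hjA : j ∉ A := fun h => hj (hA h)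
    have habs : |∑ t, X t j * r t| ≤ (K:ℝ) * (M * (μ * T)) + b * T := by
      rw [hexp j]
      calc |(∑ i ∈ A, α i * (∑ t, X t j * X t i)) + ∑ t, X t j * w t|
          ≤ |∑ i ∈ A, α i * (∑ t, X t j * X t i)| + |∑ t, X t j * w t| := abs_add_le _ _
        _ ≤ (∑ i ∈ A, M * (μ * T)) + b * T := by
            refine add_le_add ?_ (hw' j)
            refine (Finset.abs_sum_le_sum_abs _ _).trans (Finset.sum_le_sum fun i hi => ?_)
            rw [abs_mul]
            exact mul_le_mul (hMle i hi) (hkey j i (fun h => hjA (h ▸ hi)))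
              (abs_nonneg _) hM0
        _ = (A.card : ℝ) * (M * (μ * T)) + b * T := by rw [Finset.sum_const, nsmul_eq_mul]
        _ ≤ (K:ℝ) * (M * (μ * T)) + b * T := by
            have hAcard : (A.card : ℝ) ≤ K := by
              exact_mod_cast hcard ▸ Finset.card_le_card hA
            have := mul_le_mul_of_nonneg_right hAcard (show (0:ℝ) ≤ M * (μ * T) by positivity)
            linarith
    rw [one_div, inv_mul_le_iff₀ hTpos]
    calc |∑ t, X t j * r t| ≤ (K:ℝ) * (M * (μ * T)) + b * T := habs
      _ = (T:ℝ) * ((K:ℝ) * μ * M + b) := by ring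
end

section
/- Let X ∈ ℝ^{T×m} have columns satisfying ‖X_j‖₂² = T for all j, with mutual coherence μ(X). Let S* ⊆ {1,…,m} with |S*| = K, let A ⊆ S* be nonempty, and suppose r = Σ_{i∈A} α_i X_i + w with max_{1≤j≤m} (1/T)|X_jᵀ w| ≤ b. If min_{j∈A} |α_j| > (2K−1)·μ(X)·‖α‖_∞ + 2b, then min_{j∈A} (1/T)|X_jᵀ r| > max_{j∉S*} (1/T)|X_jᵀ r|, i.e., the correlation of r with every column indexed in A strictly exceeds the correlation with every column outside S*. -/
open Finset

lemma cs_abs (T : ℕ) (f g : Fin T → ℝ) :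
    |∑ t, f t * g t| ≤ Real.sqrt (∑ t, f t ^ 2) * Real.sqrt (∑ t, g t ^ 2) := by
  rw [← Real.sqrt_mul (by positivity), ← Real.sqrt_sq_eq_abs]
  exact Real.sqrt_le_sqrt (Finset.sum_mul_sq_le_sq_mul_sq _ _ _)

lemma coh_ge {T m : ℕ} (hT : 0 < T) (X : Matrix (Fin T) (Fin m) ℝ)
    (hnorm : ∀ j, ∑ t, X t j ^ 2 = (T : ℝ)) {i j : Fin m} (hij : i ≠ j) :
    |∑ t, X t i * X t j| ≤ mutualCoherence X * T := by
  have hTpos : (0:ℝ) < T := by exact_mod_cast hT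
  have hsq : Real.sqrt (T:ℝ) * Real.sqrt (T:ℝ) = (T:ℝ) := Real.mul_self_sqrt hTpos.le
  have hbdd : BddAbove (Set.range fun p : {p : Fin m × Fin m // p.1 ≠ p.2} =>
      |∑ t, X t p.val.1 * X t p.val.2| /
        (Real.sqrt (∑ t, X t p.val.1 ^ 2) * Real.sqrt (∑ t, X t p.val.2 ^ 2))) := by
    refine ⟨1, ?_⟩
    rintro x ⟨p, rfl⟩
    have hcs := cs_abs T (fun t => X t p.val.1) (fun t => X t p.val.2)
    have hd : (0:ℝ) < Real.sqrt (∑ t, X t p.val.1 ^ 2) * Real.sqrt (∑ t, X t p.val.2 ^ 2) := by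
      rw [hnorm, hnorm, hsq]; exact hTpos
    exact div_le_one_of_le₀ hcs hd.le
  have hle : |∑ t, X t i * X t j| / (T:ℝ) ≤ mutualCoherence X := by
    calc |∑ t, X t i * X t j| / (T:ℝ)
        = |∑ t, X t i * X t j| /
          (Real.sqrt (∑ t, X t i ^ 2) * Real.sqrt (∑ t, X t j ^ 2)) := by
          rw [hnorm i, hnorm j, hsq]
      _ ≤ mutualCoherence X := le_ciSup hbdd (⟨(i, j), hij⟩ : {p : Fin m × Fin m // p.1 ≠ p.2})
  rw [div_le_iff₀ hTpos] at hle
  exact hle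

theorem stmt3
    (T m K : ℕ) (hT : 0 < T)
    (X : Matrix (Fin T) (Fin m) ℝ)
    (hnorm : ∀ j, ∑ t, X t j ^ 2 = (T : ℝ))
    (Sstar : Finset (Fin m)) (hcard : Sstar.card = K)
    (A : Finset (Fin m)) (hA : A ⊆ Sstar) (hAne : A.Nonempty)
    (α : Fin m → ℝ) (w r : Fin T → ℝ)
    (b : ℝ) (hb : 0 ≤ b)
    (hr : ∀ t, r t = (∑ i ∈ A, α i * X t i) + w t)
    (hw : ∀ j, (1 / (T : ℝ)) * |∑ t, X t j * w t| ≤ b)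
    (hmin : ∀ j ∈ A,
      (2 * (K : ℝ) - 1) * mutualCoherence X * (A.sup' hAne fun i => |α i|) + 2 * b
        < |α j|) :
    ∀ j ∈ A, ∀ j' ∉ Sstar,
      (1 / (T : ℝ)) * |∑ t, X t j' * r t| < (1 / (T : ℝ)) * |∑ t, X t j * r t| := by
  intro j hj j' hj'
  have hTpos : (0:ℝ) < T := by exact_mod_cast hT
  set μ := mutualCoherence X with hμdef
  set M := A.sup' hAne fun i => |α i| with hMdef
  have hMj : |α j| ≤ M := Finset.le_sup' (fun i => |α i|) hj
  have hM0 : 0 ≤ M := le_trans (abs_nonneg _) hMj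
  have hμ0 : 0 ≤ μ := by
    have hne : j ≠ j' := fun h => hj' (h ▸ hA hj)
    have := coh_ge hT X hnorm hne
    nlinarith [abs_nonneg (∑ t, X t j * X t j')]
  -- correlation decomposition
  have hcorr : ∀ j0, ∑ t, X t j0 * r t =
      (∑ i ∈ A, α i * ∑ t, X t j0 * X t i) + ∑ t, X t j0 * w t := by
    intro j0
    have hpt : ∀ t, X t j0 * r t = (∑ i ∈ A, α i * (X t j0 * X t i)) + X t j0 * w t := by
      intro t
      rw [hr t, mul_add, Finset.mul_sum]
      congr 1
      exact Finset.sum_congr rfl fun i _ => by ring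
    rw [Finset.sum_congr rfl fun t _ => hpt t, Finset.sum_add_distrib]
    congr 1
    rw [Finset.sum_comm]
    exact Finset.sum_congr rfl fun i _ => (Finset.mul_sum _ _ _).symm
  have hW : ∀ j0, |∑ t, X t j0 * w t| ≤ b * T := by
    intro j0
    have h := mul_le_mul_of_nonneg_right (hw j0) hTpos.le
    have hc : (1 / (T:ℝ)) * |∑ t, X t j0 * w t| * T = |∑ t, X t j0 * w t| := by
      field_simp
    rw [hc] at h
    linarith
  have hKA : (A.card : ℝ) ≤ K := by
    exact_mod_cast hcard ▸ Finset.card_le_card hA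
  have hK1 : 1 ≤ A.card := Finset.one_le_card.mpr hAne
  -- bound for each cross term
  have hterm : ∀ j0, ∀ i ∈ A, i ≠ j0 → |α i * ∑ t, X t j0 * X t i| ≤ M * (μ * T) := by
    intro j0 i hi hne
    rw [abs_mul]
    have h1 : |α i| ≤ M := Finset.le_sup' (fun i => |α i|) hi
    have h2 : |∑ t, X t j0 * X t i| ≤ μ * T := coh_ge hT X hnorm (Ne.symm hne)
    exact mul_le_mul h1 h2 (abs_nonneg _) hM0
  -- upper bound for j'
  have hup : |∑ t, X t j' * r t| ≤ (K : ℝ) * (M * (μ * T)) + b * T := by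
    rw [hcorr j']
    refine le_trans (abs_add_le _ _) ?_
    have h1 : |∑ i ∈ A, α i * ∑ t, X t j' * X t i| ≤ (A.card : ℝ) * (M * (μ * T)) := by
      refine le_trans (Finset.abs_sum_le_sum_abs _ _) ?_
      have hb1 : ∑ i ∈ A, |α i * ∑ t, X t j' * X t i| ≤ A.card • (M * (μ * T)) := by
        refine Finset.sum_le_card_nsmul _ _ _ fun i hi => ?_
        exact hterm j' i hi fun h => hj' (h ▸ hA hi)
      rwa [nsmul_eq_mul] at hb1
    have h2 : (A.card : ℝ) * (M * (μ * T)) ≤ (K : ℝ) * (M * (μ * T)) := by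
      have : 0 ≤ M * (μ * T) := by positivity
      nlinarith
    linarith [hW j']
  -- lower bound for j
  have hdiag : ∑ t, X t j * X t j = (T : ℝ) := by
    rw [← hnorm j]; exact Finset.sum_congr rfl fun t _ => (sq (X t j)).symm
  have hlow : |α j| * T - ((K : ℝ) - 1) * (M * (μ * T)) - b * T ≤ |∑ t, X t j * r t| := by
    rw [hcorr j, ← Finset.add_sum_erase _ _ hj, hdiag]
    have h1 : |∑ i ∈ A.erase j, α i * ∑ t, X t j * X t i| ≤
        ((K : ℝ) - 1) * (M * (μ * T)) := by
      refine le_trans (Finset.abs_sum_le_sum_abs _ _) ?_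
      have hb1 : ∑ i ∈ A.erase j, |α i * ∑ t, X t j * X t i| ≤
          (A.erase j).card • (M * (μ * T)) := by
        refine Finset.sum_le_card_nsmul _ _ _ fun i hi => ?_
        exact hterm j i (Finset.mem_of_mem_erase hi) (Finset.ne_of_mem_erase hi)
      rw [nsmul_eq_mul, Finset.card_erase_of_mem hj] at hb1
      have hcc : ((A.card - 1 : ℕ) : ℝ) ≤ (K : ℝ) - 1 := by
        rw [Nat.cast_sub hK1]
        simpa using hKA
      have : 0 ≤ M * (μ * T) := by positivity
      nlinarith
    have h2 := hW j
    have h3 : |α j| * T = |α j * T| := by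
      rw [abs_mul, abs_of_nonneg hTpos.le]
    calc |α j| * T - ((K : ℝ) - 1) * (M * (μ * T)) - b * T
        ≤ |α j * T| - |∑ i ∈ A.erase j, α i * ∑ t, X t j * X t i| -
          |∑ t, X t j * w t| := by rw [← h3]; linarith
      _ ≤ |α j * T + ∑ i ∈ A.erase j, α i * ∑ t, X t j * X t i + ∑ t, X t j * w t| := by
          have h4 := abs_add_le (∑ i ∈ A.erase j, α i * ∑ t, X t j * X t i) (∑ t, X t j * w t)
          have h5 : α j * T + ∑ i ∈ A.erase j, α i * ∑ t, X t j * X t i + ∑ t, X t j * w t - (∑ i ∈ A.erase j, α i * ∑ t, X t j * X t i + ∑ t, X t j * w t) = α j * T := by ring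
          have h6 : |α j * (T:ℝ)| ≤
              |α j * T + ∑ i ∈ A.erase j, α i * ∑ t, X t j * X t i + ∑ t, X t j * w t| +
              |∑ i ∈ A.erase j, α i * ∑ t, X t j * X t i + ∑ t, X t j * w t| := by
            have h7 := abs_sub (α j * T + ∑ i ∈ A.erase j, α i * ∑ t, X t j * X t i + ∑ t, X t j * w t) (∑ i ∈ A.erase j, α i * ∑ t, X t j * X t i + ∑ t, X t j * w t)
            rw [h5] at h7
            exact h7
          linarith
      _ = |α j * T + ∑ x ∈ A.erase j, α x * ∑ t, X t j * X t x + ∑ t, X t j * w t| := rfl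
  -- conclude
  have hmain := hmin j hj
  have key : |∑ t, X t j' * r t| < |∑ t, X t j * r t| := by
    nlinarith [hup, hlow, mul_lt_mul_of_pos_right hmain hTpos]
  have h1T : (0:ℝ) < 1 / T := by positivity
  exact mul_lt_mul_of_pos_left key h1T
end

section
/- Consider the linear model Y = Xθ* + ε with support S* = supp(θ*) of size K ≥ 1. Assume: (i) ‖X_j‖₂² = T for all columns j and the mutual coherence satisfies μ(X) < 1/(2K−1); (ii) the noise satisfies max_{1≤j≤m} (1/T)|X_jᵀε| ≤ b for some b ≥ 0; (iii) min_{j∈S*} |θ*_j| > 2b / (1 − (2K−1)μ(X)). Then orthogonal matching pursuit run for exactly K iterations selects at every iteration an index of S* not previously selected, and its output support after K iterations equals S* exactly. -/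
open Finset

lemma mc_nonneg {T m : ℕ} (X : Matrix (Fin T) (Fin m) ℝ) : 0 ≤ mutualCoherence X :=
  Real.iSup_nonneg fun p => div_nonneg (abs_nonneg _)
    (mul_nonneg (Real.sqrt_nonneg _) (Real.sqrt_nonneg _))

lemma mc_bound {T m : ℕ} (X : Matrix (Fin T) (Fin m) ℝ) (hT : 0 < T)
    (hnorm : ∀ j, ∑ t, X t j ^ 2 = (T : ℝ)) {i j : Fin m} (hij : i ≠ j) :
    |∑ t, X t i * X t j| ≤ mutualCoherence X * T := by
  have hT' : (0 : ℝ) < T := by exact_mod_cast hT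
  have hsq : Real.sqrt (T : ℝ) * Real.sqrt (T : ℝ) = (T : ℝ) :=
    Real.mul_self_sqrt hT'.le
  have hterm : ∀ p : {p : Fin m × Fin m // p.1 ≠ p.2},
      |∑ t, X t p.val.1 * X t p.val.2| /
        (Real.sqrt (∑ t, X t p.val.1 ^ 2) * Real.sqrt (∑ t, X t p.val.2 ^ 2))
      = |∑ t, X t p.val.1 * X t p.val.2| / (T : ℝ) := by
    intro p; rw [hnorm, hnorm, hsq]
  have hcs : ∀ p : {p : Fin m × Fin m // p.1 ≠ p.2},
      |∑ t, X t p.val.1 * X t p.val.2| ≤ (T : ℝ) := by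
    intro p
    have h := sum_mul_sq_le_sq_mul_sq Finset.univ (fun t => X t p.val.1) (fun t => X t p.val.2)
    rw [hnorm, hnorm] at h
    have h2 : |∑ t, X t p.val.1 * X t p.val.2| ^ 2 ≤ (T : ℝ) ^ 2 := by
      rw [sq_abs]; nlinarith
    nlinarith [abs_nonneg (∑ t, X t p.val.1 * X t p.val.2)]
  have hbdd : BddAbove (Set.range fun p : {p : Fin m × Fin m // p.1 ≠ p.2} =>
      |∑ t, X t p.val.1 * X t p.val.2| /
        (Real.sqrt (∑ t, X t p.val.1 ^ 2) * Real.sqrt (∑ t, X t p.val.2 ^ 2))) := by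
    refine ⟨1, ?_⟩
    rintro x ⟨p, rfl⟩
    dsimp only
    rw [hterm p]
    rw [div_le_one hT']
    exact hcs p
  have hle : |∑ t, X t i * X t j| / (T : ℝ) ≤ mutualCoherence X := by
    have := le_ciSup hbdd (⟨(i, j), hij⟩ : {p : Fin m × Fin m // p.1 ≠ p.2})
    rwa [hterm] at this
  calc |∑ t, X t i * X t j| = |∑ t, X t i * X t j| / (T : ℝ) * T := by
        field_simp
    _ ≤ mutualCoherence X * T := by
        exact mul_le_mul_of_nonneg_right hle hT'.le

lemma ls_orth {T m : ℕ} (hT : 0 < T) (X : Matrix (Fin T) (Fin m) ℝ) (Y : Fin T → ℝ)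
    (A : Finset (Fin m)) (θh : Fin m → ℝ)
    (hnorm : ∀ j, ∑ t, X t j ^ 2 = (T : ℝ))
    (hmin : ∀ θ : Fin m → ℝ, (∀ i ∉ A, θ i = 0) →
      ∑ t, (Y t - ∑ i, X t i * θh i) ^ 2 ≤ ∑ t, (Y t - ∑ i, X t i * θ i) ^ 2)
    (hsupp : ∀ i ∉ A, θh i = 0) :
    ∀ j ∈ A, ∑ t, X t j * (Y t - ∑ i, X t i * θh i) = 0 := by
  intro j hj
  have hT' : (0 : ℝ) < T := by exact_mod_cast hT
  set c := ∑ t, X t j * (Y t - ∑ i, X t i * θh i) with hc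
  set s := c / (T : ℝ) with hs
  set θ : Fin m → ℝ := fun i => θh i + if i = j then s else 0 with hθ
  have hsupp' : ∀ i ∉ A, θ i = 0 := by
    intro i hi
    have : i ≠ j := fun h => hi (h ▸ hj)
    simp [hθ, this, hsupp i hi]
  have key := hmin θ hsupp'
  have hexp : ∀ t, ∑ i, X t i * θ i = (∑ i, X t i * θh i) + s * X t j := by
    intro t
    simp only [hθ, mul_add, Finset.sum_add_distrib, mul_ite, mul_zero]
    rw [Finset.sum_ite_eq' Finset.univ j (fun i => X t i * s)]
    simp [mul_comm]
  have hrw : ∑ t, (Y t - ∑ i, X t i * θ i) ^ 2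
      = (∑ t, (Y t - ∑ i, X t i * θh i) ^ 2) - 2 * s * c + s ^ 2 * T := by
    have : ∀ t, (Y t - ∑ i, X t i * θ i) ^ 2
        = (Y t - ∑ i, X t i * θh i) ^ 2
          - 2 * s * (X t j * (Y t - ∑ i, X t i * θh i)) + s ^ 2 * (X t j ^ 2) := by
      intro t; rw [hexp t]; ring
    simp only [this, Finset.sum_add_distrib, Finset.sum_sub_distrib, ← Finset.mul_sum, ← hc,
      hnorm]
  rw [hrw] at key
  have h2 : 0 ≤ - 2 * s * c + s ^ 2 * T := by linarith
  have heq : -2 * s * c + s ^ 2 * T = -(c ^ 2 / T) := by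
    rw [hs]; field_simp; ring
  have hc2 : c ^ 2 ≤ 0 := by
    have h3 : c ^ 2 / T ≤ 0 := by linarith
    have := (div_nonpos_iff.mp h3)
    rcases this with ⟨h4, h5⟩ | ⟨h4, h5⟩
    · linarith
    · exact h4
  have : c ^ 2 = 0 := le_antisymm hc2 (sq_nonneg c)
  exact pow_eq_zero_iff (two_ne_zero) |>.mp this

lemma omp_step {T m K : ℕ} (hT : 0 < T) (hK : 1 ≤ K)
    (X : Matrix (Fin T) (Fin m) ℝ)
    (θstar : Fin m → ℝ) (ε Y : Fin T → ℝ)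
    (hY : ∀ t, Y t = (∑ j, X t j * θstar j) + ε t)
    (Sstar : Finset (Fin m)) (hSstar : ∀ j, j ∈ Sstar ↔ θstar j ≠ 0)
    (hcard : Sstar.card = K)
    (hnorm : ∀ j, ∑ t, X t j ^ 2 = (T : ℝ))
    (hμ : mutualCoherence X < 1 / (2 * (K : ℝ) - 1))
    (b : ℝ) (hb : 0 ≤ b)
    (hnoise : ∀ j, (1 / (T : ℝ)) * |∑ t, X t j * ε t| ≤ b)
    (hsignal : ∀ j ∈ Sstar,
      2 * b / (1 - (2 * (K : ℝ) - 1) * mutualCoherence X) < |θstar j|)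
    (Sk : Finset (Fin m)) (θk : Fin m → ℝ) (jk : Fin m)
    (hsub : Sk ⊆ Sstar) (hcardk : Sk.card < K)
    (hsupp : ∀ i ∉ Sk, θk i = 0)
    (horth : ∀ i ∈ Sk, ∑ t, X t i * (Y t - ∑ i', X t i' * θk i') = 0)
    (hmax : ∀ j ∉ Sk,
      |∑ t, X t j * (Y t - ∑ i, X t i * θk i)|
        ≤ |∑ t, X t jk * (Y t - ∑ i, X t i * θk i)|) :
    jk ∈ Sstar := by
  set μ := mutualCoherence X with hμdef
  have hT' : (0 : ℝ) < T := by exact_mod_cast hT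
  have hK' : (1 : ℝ) ≤ K := by exact_mod_cast hK
  have hKpos : (0 : ℝ) < 2 * (K : ℝ) - 1 := by linarith
  have hμ0 : 0 ≤ μ := mc_nonneg X
  have hμd : 0 < 1 - (2 * (K : ℝ) - 1) * μ := by
    have h1 : μ * (2 * (K : ℝ) - 1) < 1 := (lt_div_iff₀ hKpos).mp hμ
    nlinarith
  set Δ : Fin m → ℝ := fun i => θstar i - θk i with hΔdef
  have hΔ0 : ∀ i ∉ Sstar, Δ i = 0 := by
    intro i hi
    have h1 : θstar i = 0 := by
      by_contra h; exact hi ((hSstar i).mpr h)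
    have h2 : θk i = 0 := hsupp i (fun hmem => hi (hsub hmem))
    simp [hΔdef, h1, h2]
  have hC : ∀ j, ∑ t, X t j * (Y t - ∑ i, X t i * θk i)
      = (∑ i ∈ Sstar, (∑ t, X t j * X t i) * Δ i) + ∑ t, X t j * ε t := by
    intro j
    have step1 : ∀ t, Y t - ∑ i, X t i * θk i = (∑ i, X t i * Δ i) + ε t := by
      intro t
      rw [hY t]
      simp only [hΔdef, mul_sub, Finset.sum_sub_distrib]
      ring
    calc ∑ t, X t j * (Y t - ∑ i, X t i * θk i)
        = ∑ t, (X t j * ∑ i, X t i * Δ i) + ∑ t, X t j * ε t := by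
          simp only [step1, mul_add, Finset.sum_add_distrib]
      _ = (∑ i, (∑ t, X t j * X t i) * Δ i) + ∑ t, X t j * ε t := by
          congr 1
          simp only [Finset.mul_sum]
          rw [Finset.sum_comm]
          refine Finset.sum_congr rfl fun i _ => ?_
          rw [Finset.sum_mul]
          refine Finset.sum_congr rfl fun t _ => by ring
      _ = (∑ i ∈ Sstar, (∑ t, X t j * X t i) * Δ i) + ∑ t, X t j * ε t := by
          congr 1
          exact (Finset.sum_subset (Finset.subset_univ Sstar)
            (fun i _ hi => by rw [hΔ0 i hi, mul_zero])).symm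
  have hE : ∀ j, |∑ t, X t j * ε t| ≤ b * T := by
    intro j
    have h := hnoise j
    rw [one_div, inv_mul_le_iff₀ hT'] at h
    linarith [h]
  have hne : Sstar.Nonempty := Finset.card_pos.mp (by omega)
  obtain ⟨jd, hjdS, hjdmax⟩ := Sstar.exists_max_image (fun i => |Δ i|) hne
  set M := |Δ jd| with hMdef
  have hM0 : 0 ≤ M := abs_nonneg _
  have hne2 : Sk ≠ Sstar := by
    intro h; rw [h, hcard] at hcardk; exact lt_irrefl _ hcardk
  obtain ⟨j0, hj0S, hj0n⟩ := Finset.exists_of_ssubset (hsub.ssubset_of_ne hne2)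
  have hMbig : 2 * b < M * (1 - (2 * (K : ℝ) - 1) * μ) := by
    have h0 := hsignal j0 hj0S
    have hΔj0 : |θstar j0| = |Δ j0| := by simp [hΔdef, hsupp j0 hj0n]
    have hle : |Δ j0| ≤ M := hjdmax j0 hj0S
    have : 2 * b / (1 - (2 * (K : ℝ) - 1) * μ) < M := by
      rw [hΔj0] at h0; linarith
    exact (div_lt_iff₀ hμd).mp this |>.trans_eq (by ring)
  have hcross : ∀ (j : Fin m) (A : Finset (Fin m)), A ⊆ Sstar → j ∉ A →
      |∑ i ∈ A, (∑ t, X t j * X t i) * Δ i| ≤ (A.card : ℝ) * (μ * T * M) := by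
    intro j A hA hjA
    calc |∑ i ∈ A, (∑ t, X t j * X t i) * Δ i|
        ≤ ∑ i ∈ A, |(∑ t, X t j * X t i) * Δ i| := Finset.abs_sum_le_sum_abs _ _
      _ ≤ ∑ _i ∈ A, μ * T * M := by
          refine Finset.sum_le_sum fun i hi => ?_
          rw [abs_mul]
          have hji : j ≠ i := fun h => hjA (h ▸ hi)
          exact mul_le_mul (mc_bound X hT hnorm hji) (hjdmax i (hA hi)) (abs_nonneg _)
            (mul_nonneg hμ0 hT'.le)
      _ = A.card * (μ * T * M) := by rw [Finset.sum_const, nsmul_eq_mul]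
  have hout : ∀ j ∉ Sstar, |∑ t, X t j * (Y t - ∑ i, X t i * θk i)|
      ≤ (K : ℝ) * (μ * T * M) + b * T := by
    intro j hj
    rw [hC j]
    refine (abs_add_le _ _).trans ?_
    have h1 := hcross j Sstar subset_rfl hj
    rw [hcard] at h1
    linarith [hE j]
  -- lower bound at jd
  have hdiag : (∑ t, X t jd * X t jd) * Δ jd = (T : ℝ) * Δ jd := by
    have h : ∑ t, X t jd * X t jd = (T : ℝ) := by
      rw [← hnorm jd]; exact Finset.sum_congr rfl fun t _ => (sq (X t jd)).symm
    rw [h]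
  have hCjd : ∑ t, X t jd * (Y t - ∑ i, X t i * θk i)
      = (T : ℝ) * Δ jd + ((∑ i ∈ Sstar.erase jd, (∑ t, X t jd * X t i) * Δ i)
          + ∑ t, X t jd * ε t) := by
    rw [hC jd, ← Finset.add_sum_erase Sstar _ hjdS, hdiag]
    ring
  have hrest : |(∑ i ∈ Sstar.erase jd, (∑ t, X t jd * X t i) * Δ i)
      + ∑ t, X t jd * ε t| ≤ ((K : ℝ) - 1) * (μ * T * M) + b * T := by
    refine (abs_add_le _ _).trans ?_
    have h1 := hcross jd (Sstar.erase jd) (Finset.erase_subset _ _) (Finset.notMem_erase _ _)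
    rw [Finset.card_erase_of_mem hjdS, hcard] at h1
    have hcast : ((K - 1 : ℕ) : ℝ) = (K : ℝ) - 1 := by
      rw [Nat.cast_sub hK]; norm_num
    rw [hcast] at h1
    linarith [hE jd]
  have hlow : (T : ℝ) * M - (((K : ℝ) - 1) * (μ * T * M) + b * T)
      ≤ |∑ t, X t jd * (Y t - ∑ i, X t i * θk i)| := by
    rw [hCjd]
    set a := (T : ℝ) * Δ jd
    set R := (∑ i ∈ Sstar.erase jd, (∑ t, X t jd * X t i) * Δ i) + ∑ t, X t jd * ε t
    have habs : |a| ≤ |a + R| + |R| := by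
      have := abs_add_le (a + R) (-R)
      simpa using this
    have haM : |a| = (T : ℝ) * M := by
      rw [abs_mul, abs_of_nonneg hT'.le, hMdef]
    linarith [hrest]
  by_cases hjdk : jd ∈ Sk
  · exfalso
    rw [horth jd hjdk, abs_zero] at hlow
    nlinarith [mul_pos hT' (sub_pos.mpr hMbig),
      mul_nonneg (mul_nonneg (Nat.cast_nonneg K : (0:ℝ) ≤ K) hμ0)
        (mul_nonneg hT'.le hM0),
      mul_nonneg hb hT'.le]
  · by_contra hns
    have h1 := hmax jd hjdk
    have h2 := hout jk hns
    nlinarith [mul_pos hT' (sub_pos.mpr hMbig)]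


theorem stmt4
    (T m K : ℕ) (hT : 0 < T) (hK : 1 ≤ K)
    (X : Matrix (Fin T) (Fin m) ℝ)
    (θstar : Fin m → ℝ) (ε Y : Fin T → ℝ)
    (hY : ∀ t, Y t = (∑ j, X t j * θstar j) + ε t)
    (Sstar : Finset (Fin m)) (hSstar : ∀ j, j ∈ Sstar ↔ θstar j ≠ 0)
    (hcard : Sstar.card = K)
    -- (i) normalized columns and coherence condition
    (hnorm : ∀ j, ∑ t, X t j ^ 2 = (T : ℝ))
    (hμ : mutualCoherence X < 1 / (2 * (K : ℝ) - 1))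
    -- (ii) uniform bound on noise correlations
    (b : ℝ) (hb : 0 ≤ b)
    (hnoise : ∀ j, (1 / (T : ℝ)) * |∑ t, X t j * ε t| ≤ b)
    -- (iii) minimum signal strength
    (hsignal : ∀ j ∈ Sstar,
      2 * b / (1 - (2 * (K : ℝ) - 1) * mutualCoherence X) < |θstar j|)
    -- an OMP run: supports, coefficient estimates, and selected indices
    (S : ℕ → Finset (Fin m)) (θhat : ℕ → Fin m → ℝ) (jsel : ℕ → Fin m)
    (hS0 : S 0 = ∅) (hθ0 : θhat 0 = 0)
    -- selection step: `jsel k` maximizes `|X_jᵀ r^k|` over `j ∉ S^k`,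
    -- where `r^k = Y - X θ̂^k`
    (hsel : ∀ k < K, jsel k ∉ S k ∧
      ∀ j ∉ S k,
        |∑ t, X t j * (Y t - ∑ i, X t i * θhat k i)|
          ≤ |∑ t, X t (jsel k) * (Y t - ∑ i, X t i * θhat k i)|)
    (hSsucc : ∀ k < K, S (k + 1) = insert (jsel k) (S k))
    -- projection step: `θ̂^{k+1}` is a least-squares fit of `Y` on the columns in `S^{k+1}`
    (hLS : ∀ k < K,
      (∀ i ∉ S (k + 1), θhat (k + 1) i = 0) ∧
      ∀ θ : Fin m → ℝ, (∀ i ∉ S (k + 1), θ i = 0) →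
        ∑ t, (Y t - ∑ i, X t i * θhat (k + 1) i) ^ 2
          ≤ ∑ t, (Y t - ∑ i, X t i * θ i) ^ 2) :
    (∀ k < K, jsel k ∈ Sstar ∧ jsel k ∉ S k) ∧ S K = Sstar := by
  have hsuppk : ∀ k, k ≤ K → ∀ i ∉ S k, θhat k i = 0 := by
    intro k hk
    match k with
    | 0 => intro i _; rw [hθ0]; rfl
    | Nat.succ j => exact (hLS j (by omega)).1
  have horthk : ∀ k, k ≤ K → ∀ i ∈ S k,
      ∑ t, X t i * (Y t - ∑ i', X t i' * θhat k i') = 0 := by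
    intro k hk
    match k with
    | 0 => intro i hi; rw [hS0] at hi; exact absurd hi (Finset.notMem_empty i)
    | Nat.succ j =>
      exact ls_orth hT X Y (S (j + 1)) (θhat (j + 1)) hnorm (hLS j (by omega)).2
        (hLS j (by omega)).1
  have hstep : ∀ k < K, S k ⊆ Sstar → (S k).card = k → jsel k ∈ Sstar := by
    intro k hk hsub hcardk
    exact omp_step hT hK X θstar ε Y hY Sstar hSstar hcard hnorm hμ b hb hnoise hsignal
      (S k) (θhat k) (jsel k) hsub (hcardk.trans_lt hk) (hsuppk k hk.le) (horthk k hk.le)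
      (hsel k hk).2
  have hinv : ∀ k ≤ K, S k ⊆ Sstar ∧ (S k).card = k := by
    intro k
    induction k with
    | zero => intro _; simp [hS0]
    | succ j ih =>
      intro hjk
      have hj : j < K := by omega
      obtain ⟨h1, h2⟩ := ih (by omega)
      have hjs := hstep j hj h1 h2
      rw [hSsucc j hj]
      exact ⟨Finset.insert_subset hjs h1,
        by rw [Finset.card_insert_of_notMem (hsel j hj).1, h2]⟩
  refine ⟨fun k hk => ⟨hstep k hk (hinv k hk.le).1 (hinv k hk.le).2, (hsel k hk).1⟩, ?_⟩
  exact Finset.eq_of_subset_of_card_le (hinv K le_rfl).1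
    (by rw [(hinv K le_rfl).2, hcard])
end

section
/- Let Y = Xθ* + ε with support S* = supp(θ*), let λ > 0, and suppose the noise satisfies ‖(1/T)Xᵀε‖_∞ ≤ λ/2. Let θ̂ be any minimizer of the Lasso objective θ ↦ (1/(2T))‖Y − Xθ‖₂² + λ‖θ‖₁, and set Δ = θ̂ − θ*. Then the error lies in the cone ‖Δ_{(S*)ᶜ}‖₁ ≤ 3‖Δ_{S*}‖₁, where Δ_S denotes the restriction of Δ to indices in S (zero outside S). -/
open Finset

theorem stmt7
    (T m : ℕ) (hT : 0 < T)
    (X : Matrix (Fin T) (Fin m) ℝ)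
    (θstar : Fin m → ℝ) (ε Y : Fin T → ℝ)
    (hY : ∀ t, Y t = (∑ j, X t j * θstar j) + ε t)
    (Sstar : Finset (Fin m)) (hSstar : ∀ j, j ∈ Sstar ↔ θstar j ≠ 0)
    (lam : ℝ) (hlam : 0 < lam)
    -- the noise satisfies `‖(1/T) Xᵀε‖_∞ ≤ λ/2`
    (hnoise : ∀ j, |(1 / (T : ℝ)) * ∑ t, X t j * ε t| ≤ lam / 2)
    (θhat : Fin m → ℝ)
    -- `θhat` is a minimizer of the Lasso objective
    (hmin : ∀ θ : Fin m → ℝ,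
      (1 / (2 * (T : ℝ))) * (∑ t, (Y t - ∑ j, X t j * θhat j) ^ 2)
          + lam * ∑ j, |θhat j|
        ≤ (1 / (2 * (T : ℝ))) * (∑ t, (Y t - ∑ j, X t j * θ j) ^ 2)
          + lam * ∑ j, |θ j|) :
    ∑ j ∈ Sstarᶜ, |θhat j - θstar j| ≤ 3 * ∑ j ∈ Sstar, |θhat j - θstar j| := by
  set Δ : Fin m → ℝ := fun j => θhat j - θstar j with hΔ
  set v : Fin T → ℝ := fun t => ∑ j, X t j * Δ j with hv
  have hTpos : (0:ℝ) < T := by exact_mod_cast hT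
  have hstar : ∀ t, Y t - ∑ j, X t j * θstar j = ε t := fun t => by rw [hY]; ring
  have hres : ∀ t, Y t - ∑ j, X t j * θhat j = ε t - v t := by
    intro t
    rw [hY, hv]
    simp only [hΔ, mul_sub]
    rw [Finset.sum_sub_distrib]
    ring
  have h1 := hmin θstar
  simp only [hres, hstar] at h1
  have hexp : ∑ t, (ε t - v t) ^ 2
      = ∑ t, (ε t) ^ 2 - 2 * ∑ t, ε t * v t + ∑ t, (v t) ^ 2 := by
    have h : ∀ t : Fin T, (ε t - v t) ^ 2 = (ε t) ^ 2 - 2 * (ε t * v t) + (v t) ^ 2 :=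
      fun t => by ring
    rw [Finset.sum_congr rfl (fun t _ => h t), Finset.sum_add_distrib,
      Finset.sum_sub_distrib, Finset.mul_sum]
  have hswap : ∑ t, ε t * v t = ∑ j, Δ j * ∑ t, X t j * ε t := by
    simp only [hv, Finset.mul_sum]
    rw [Finset.sum_comm]
    exact Finset.sum_congr rfl fun j _ => Finset.sum_congr rfl fun t _ => by ring
  have hbd : (1 / (T:ℝ)) * ∑ t, ε t * v t ≤ (lam / 2) * ∑ j, |Δ j| := by
    rw [hswap, Finset.mul_sum, Finset.mul_sum]
    refine Finset.sum_le_sum fun j _ => ?_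
    calc (1 / (T:ℝ)) * (Δ j * ∑ t, X t j * ε t)
        = Δ j * ((1 / (T:ℝ)) * ∑ t, X t j * ε t) := by ring
      _ ≤ |Δ j * ((1 / (T:ℝ)) * ∑ t, X t j * ε t)| := le_abs_self _
      _ = |Δ j| * |(1 / (T:ℝ)) * ∑ t, X t j * ε t| := abs_mul _ _
      _ ≤ |Δ j| * (lam / 2) := mul_le_mul_of_nonneg_left (hnoise j) (abs_nonneg _)
      _ = (lam / 2) * |Δ j| := mul_comm _ _
  have key : lam * ∑ j, |θhat j| ≤ lam * ∑ j, |θstar j| + (lam / 2) * ∑ j, |Δ j| := by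
    rw [hexp] at h1
    have hring : (1 / (2 * (T:ℝ))) *
        (∑ t, (ε t) ^ 2 - 2 * ∑ t, ε t * v t + ∑ t, (v t) ^ 2)
        = (1 / (2 * (T:ℝ))) * ∑ t, (ε t) ^ 2 - (1 / (T:ℝ)) * ∑ t, ε t * v t
            + (1 / (2 * (T:ℝ))) * ∑ t, (v t) ^ 2 := by
      ring
    rw [hring] at h1
    have hD : (0:ℝ) ≤ (1 / (2 * (T:ℝ))) * ∑ t, (v t) ^ 2 := by positivity
    linarith
  have key2 : ∑ j, |θhat j| ≤ ∑ j, |θstar j| + (1 / 2) * ∑ j, |Δ j| := by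
    nlinarith [key]
  have hsplit1 : ∑ j ∈ Sstar, |θhat j| + ∑ j ∈ Sstarᶜ, |θhat j| = ∑ j, |θhat j| :=
    Finset.sum_add_sum_compl _ _
  have hsplit2 : ∑ j ∈ Sstar, |θstar j| + ∑ j ∈ Sstarᶜ, |θstar j| = ∑ j, |θstar j| :=
    Finset.sum_add_sum_compl _ _
  have hsplit3 : ∑ j ∈ Sstar, |Δ j| + ∑ j ∈ Sstarᶜ, |Δ j| = ∑ j, |Δ j| :=
    Finset.sum_add_sum_compl _ _
  have hzero : ∑ j ∈ Sstarᶜ, |θstar j| = 0 := by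
    refine Finset.sum_eq_zero fun j hj => ?_
    have := (hSstar j).not.mp (Finset.mem_compl.mp hj)
    simp at this
    simp [this]
  have hcompl : ∑ j ∈ Sstarᶜ, |θhat j| = ∑ j ∈ Sstarᶜ, |Δ j| := by
    refine Finset.sum_congr rfl fun j hj => ?_
    have := (hSstar j).not.mp (Finset.mem_compl.mp hj)
    simp at this
    simp [hΔ, this]
  have hS : ∑ j ∈ Sstar, |θstar j| ≤ ∑ j ∈ Sstar, |θhat j| + ∑ j ∈ Sstar, |Δ j| := by
    rw [← Finset.sum_add_distrib]
    refine Finset.sum_le_sum fun j _ => ?_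
    have : θstar j = θhat j - Δ j := by simp [hΔ]
    rw [this]
    exact (abs_sub _ _).trans (by simp [abs_sub_comm])
  linarith
end

section
/- Let Y = Xθ* + ε with support S* = supp(θ*) of size K, let λ > 0, and suppose: (i) the restricted eigenvalue constant satisfies κ(S*,3) ≥ κ* > 0; and (ii) ‖(1/T)Xᵀε‖_∞ ≤ λ/2. Let θ̂ be any Lasso minimizer with parameter λ and Δ = θ̂ − θ*. Then: (a) (1/T)‖XΔ‖₂² ≤ 36 λ² K / κ*²; (b) ‖Δ_{S*}‖₂ ≤ 6 λ √K / κ*²; (c) ‖Δ‖₁ ≤ 24 λ K / κ*². -/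
open Finset Matrix

/-!
Comparing the Lasso objective at `θhat` and at `θstar` gives the basic inequality
`(1/T)‖XΔ‖² + λ‖Δ_{S*ᶜ}‖₁ ≤ 3λ‖Δ_{S*}‖₁`: the cross term `(1/T)⟨Xᵀε, Δ⟩` costs at most
`(λ/2)‖Δ‖₁` by Hölder, and since `θstar` vanishes off `S*` the penalty difference is at most
`λ(‖Δ_{S*}‖₁ - ‖Δ_{S*ᶜ}‖₁)`. Hence `Δ` lies in the cone of the restricted eigenvalue condition,
so `κ*² ‖Δ_{S*}‖₂² ≤ (1/T)‖XΔ‖² ≤ 3λ√K ‖Δ_{S*}‖₂` by Cauchy–Schwarz, which bounds `‖Δ_{S*}‖₂`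
by `3λ√K/κ*²`; the prediction and `ℓ₁` bounds follow, the latter from `‖Δ‖₁ ≤ 4‖Δ_{S*}‖₁`.
-/

theorem sum_abs_le_sqrt_card_mul_sqrt_sum_sq {ι : Type*} (S : Finset ι) (f : ι → ℝ) :
    ∑ j ∈ S, |f j| ≤ √(#S : ℝ) * √(∑ j ∈ S, f j ^ 2) := by
  rw [← Real.sqrt_mul (Nat.cast_nonneg _)]
  refine Real.le_sqrt_of_sq_le ?_
  simpa only [sq_abs] using sq_sum_le_card_mul_sum_sq (s := S) (f := fun j => |f j|)

theorem le_div_sq_of_sq_mul_sq_le_mul {s c κ : ℝ} (hκ : 0 < κ) (hs : 0 ≤ s) (hc : 0 ≤ c)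
    (h : κ ^ 2 * s ^ 2 ≤ c * s) : s ≤ c / κ ^ 2 := by
  rw [le_div_iff₀ (by positivity)]
  rcases hs.eq_or_lt with rfl | hs
  · simpa using hc
  · nlinarith

theorem sq_mul_sq_le_of_mul_sqrt_le_sqrt {κ T s Q : ℝ} (hT : 0 < T) (hκ : 0 ≤ κ) (hs : 0 ≤ s)
    (hQ : 0 ≤ Q) (h : κ * √T * s ≤ √Q) : κ ^ 2 * s ^ 2 ≤ 1 / T * Q := by
  have hsq := (Real.le_sqrt (by positivity) hQ).1 h
  rw [mul_pow, mul_pow, Real.sq_sqrt hT.le] at hsq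
  rw [one_div_mul_eq_div, le_div_iff₀ hT]
  linarith

theorem dotProduct_le_mul_sum_abs {ι : Type*} [Fintype ι] {v w : ι → ℝ} {c : ℝ}
    (hv : ∀ j, |v j| ≤ c) : v ⬝ᵥ w ≤ c * ∑ j, |w j| := by
  rw [mul_sum]
  refine sum_le_sum fun j _ => ?_
  calc v j * w j ≤ |v j| * |w j| := by rw [← abs_mul]; exact le_abs_self _
    _ ≤ c * |w j| := by gcongr; exact hv j

theorem sum_abs_sub_sum_abs_le {ι : Type*} [Fintype ι] [DecidableEq ι] {S : Finset ι}
    {θ θ' : ι → ℝ} (hθ : ∀ j ∉ S, θ j = 0) :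
    ∑ j, |θ j| - ∑ j, |θ' j| ≤ ∑ j ∈ S, |θ' j - θ j| - ∑ j ∈ Sᶜ, |θ' j - θ j| := by
  have hθ_off : ∑ j ∈ Sᶜ, |θ j| = 0 :=
    sum_eq_zero fun j hj => by simp [hθ j (mem_compl.1 hj)]
  have hθ'_off : ∑ j ∈ Sᶜ, |θ' j - θ j| = ∑ j ∈ Sᶜ, |θ' j| :=
    sum_congr rfl fun j hj => by simp [hθ j (mem_compl.1 hj)]
  have hon : ∑ j ∈ S, |θ j| - ∑ j ∈ S, |θ' j| ≤ ∑ j ∈ S, |θ' j - θ j| := by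
    rw [← sum_sub_distrib]
    exact sum_le_sum fun j _ => abs_sub_comm (θ' j) (θ j) ▸ abs_sub_abs_le_abs_sub _ _
  rw [← sum_add_sum_compl S, ← sum_add_sum_compl S (fun j => |θ' j|)]
  linarith

section Lasso

variable {n p : Type*} [Fintype n] [Fintype p]

noncomputable def lassoObjective (X : Matrix n p ℝ) (Y : n → ℝ) (T lam : ℝ) (θ : p → ℝ) : ℝ :=
  1 / (2 * T) * ∑ t, (Y t - (X *ᵥ θ) t) ^ 2 + lam * ∑ j, |θ j|

theorem sum_sq_sub_mulVec (X : Matrix n p ℝ) (ε : n → ℝ) (Δ : p → ℝ) :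
    ∑ t, (ε t - (X *ᵥ Δ) t) ^ 2
      = ∑ t, ε t ^ 2 - 2 * (Xᵀ *ᵥ ε) ⬝ᵥ Δ + ∑ t, (X *ᵥ Δ) t ^ 2 := by
  have hcross : (Xᵀ *ᵥ ε) ⬝ᵥ Δ = ∑ t, ε t * (X *ᵥ Δ) t := by
    rw [mulVec_transpose, ← dotProduct_mulVec]
    rfl
  rw [hcross, mul_sum, ← sum_sub_distrib, ← sum_add_distrib]
  exact sum_congr rfl fun t _ => by ring

theorem lasso_basic_inequality [DecidableEq p] {X : Matrix n p ℝ} {Y ε : n → ℝ}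
    {θstar θhat : p → ℝ} {S : Finset p} {T lam : ℝ} (hlam : 0 ≤ lam) (hY : Y = X *ᵥ θstar + ε)
    (hθstar : ∀ j ∉ S, θstar j = 0) (hnoise : ∀ j, |1 / T * (Xᵀ *ᵥ ε) j| ≤ lam / 2)
    (hmin : lassoObjective X Y T lam θhat ≤ lassoObjective X Y T lam θstar) :
    1 / T * ∑ t, (X *ᵥ (θhat - θstar)) t ^ 2 + lam * ∑ j ∈ Sᶜ, |(θhat - θstar) j|
      ≤ 3 * lam * ∑ j ∈ S, |(θhat - θstar) j| := by
  set Δ := θhat - θstar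
  have hres : ∀ t, Y t - (X *ᵥ θhat) t = ε t - (X *ᵥ Δ) t := fun t => by
    simp only [hY, Δ, mulVec_sub, Pi.add_apply, Pi.sub_apply]
    ring
  have hres_star : ∀ t, Y t - (X *ᵥ θstar) t = ε t := fun t => by
    simp only [hY, Pi.add_apply]
    ring
  have hnoise' : (1 / T) * ((Xᵀ *ᵥ ε) ⬝ᵥ Δ) ≤ lam / 2 * ∑ j, |Δ j| := by
    rw [← smul_eq_mul, ← smul_dotProduct]
    exact dotProduct_le_mul_sum_abs hnoise
  rw [← sum_add_sum_compl S] at hnoise'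
  have hl1 : ∑ j, |θstar j| - ∑ j, |θhat j| ≤ ∑ j ∈ S, |Δ j| - ∑ j ∈ Sᶜ, |Δ j| :=
    sum_abs_sub_sum_abs_le hθstar
  simp only [lassoObjective, hres, hres_star, sum_sq_sub_mulVec] at hmin
  have hscale : ∀ E C Q : ℝ,
      1 / (2 * T) * (E - 2 * C + Q) = 1 / (2 * T) * E - 1 / T * C + 1 / T * Q / 2 :=
    fun E C Q => by ring
  rw [hscale] at hmin
  linarith [mul_le_mul_of_nonneg_left hl1 hlam]

end Lasso

theorem stmt8
    (T m K : ℕ) (hT : 0 < T)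
    (X : Matrix (Fin T) (Fin m) ℝ)
    (θstar : Fin m → ℝ) (ε Y : Fin T → ℝ)
    (hY : ∀ t, Y t = (∑ j, X t j * θstar j) + ε t)
    (Sstar : Finset (Fin m)) (hSstar : ∀ j, j ∈ Sstar ↔ θstar j ≠ 0)
    (hcard : Sstar.card = K)
    (lam : ℝ) (hlam : 0 < lam)
    (κstar : ℝ) (hκ : 0 < κstar)
    -- (i) restricted eigenvalue condition: `κ(S*, 3) ≥ κ*`, i.e. `‖Xu‖₂ ≥ κ* √T ‖u_{S*}‖₂`
    -- for every `u` in the cone `‖u_{(S*)ᶜ}‖₁ ≤ 3 ‖u_{S*}‖₁`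
    (hRE : ∀ u : Fin m → ℝ,
      (∑ j ∈ Sstarᶜ, |u j|) ≤ 3 * ∑ j ∈ Sstar, |u j| →
      κstar * Real.sqrt (T : ℝ) * Real.sqrt (∑ j ∈ Sstar, u j ^ 2)
        ≤ Real.sqrt (∑ t, (∑ j, X t j * u j) ^ 2))
    -- (ii) the noise satisfies `‖(1/T) Xᵀε‖_∞ ≤ λ/2`
    (hnoise : ∀ j, |(1 / (T : ℝ)) * ∑ t, X t j * ε t| ≤ lam / 2)
    (θhat : Fin m → ℝ)
    -- `θhat` is a minimizer of the Lasso objective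
    (hmin : ∀ θ : Fin m → ℝ,
      (1 / (2 * (T : ℝ))) * (∑ t, (Y t - ∑ j, X t j * θhat j) ^ 2)
          + lam * ∑ j, |θhat j|
        ≤ (1 / (2 * (T : ℝ))) * (∑ t, (Y t - ∑ j, X t j * θ j) ^ 2)
          + lam * ∑ j, |θ j|) :
    (1 / (T : ℝ)) * (∑ t, (∑ j, X t j * (θhat j - θstar j)) ^ 2)
        ≤ 36 * lam ^ 2 * K / κstar ^ 2 ∧
    Real.sqrt (∑ j ∈ Sstar, (θhat j - θstar j) ^ 2)
        ≤ 6 * lam * Real.sqrt (K : ℝ) / κstar ^ 2 ∧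
    (∑ j, |θhat j - θstar j|) ≤ 24 * lam * K / κstar ^ 2 := by
  set Δ : Fin m → ℝ := θhat - θstar
  set Q := ∑ t, (X *ᵥ Δ) t ^ 2
  set a := ∑ j ∈ Sstar, |Δ j|
  set b := ∑ j ∈ Sstarᶜ, |Δ j|
  set s := √(∑ j ∈ Sstar, Δ j ^ 2)
  have hθstar : ∀ j ∉ Sstar, θstar j = 0 := fun j hj => not_not.1 (mt (hSstar j).2 hj)
  have hbasic : 1 / (T : ℝ) * Q + lam * b ≤ 3 * lam * a :=
    lasso_basic_inequality hlam.le (funext hY) hθstar hnoise (hmin θstar)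
  have hQ : 0 ≤ Q := sum_nonneg fun t _ => sq_nonneg _
  have hcone : b ≤ 3 * a := by
    have hfit : 0 ≤ 1 / (T : ℝ) * Q := by positivity
    exact le_of_mul_le_mul_left (by linarith) hlam
  have hre : κstar ^ 2 * s ^ 2 ≤ 1 / (T : ℝ) * Q :=
    sq_mul_sq_le_of_mul_sqrt_le_sqrt (Nat.cast_pos.2 hT) hκ.le (Real.sqrt_nonneg _) hQ
      (hRE Δ hcone)
  have hCS : a ≤ √(K : ℝ) * s := hcard ▸ sum_abs_le_sqrt_card_mul_sqrt_sum_sq Sstar Δ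
  have hpred : 1 / (T : ℝ) * Q ≤ 3 * lam * √(K : ℝ) * s := by
    have hb : 0 ≤ b := sum_nonneg fun j _ => abs_nonneg _
    linarith [mul_nonneg hlam.le hb, mul_le_mul_of_nonneg_left hCS hlam.le]
  have hs : s ≤ 3 * lam * √(K : ℝ) / κstar ^ 2 :=
    le_div_sq_of_sq_mul_sq_le_mul hκ (Real.sqrt_nonneg _) (by positivity) (hre.trans hpred)
  have hK : √(K : ℝ) * √(K : ℝ) = K := Real.mul_self_sqrt (Nat.cast_nonneg _)
  show 1 / (T : ℝ) * Q ≤ _ ∧ s ≤ _ ∧ ∑ j, |Δ j| ≤ _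
  refine ⟨?_, hs.trans (by gcongr; norm_num), ?_⟩
  · calc 1 / (T : ℝ) * Q ≤ 3 * lam * √(K : ℝ) * s := hpred
      _ ≤ 3 * lam * √(K : ℝ) * (3 * lam * √(K : ℝ) / κstar ^ 2) := by gcongr
      _ = 9 * lam ^ 2 * K / κstar ^ 2 := by linear_combination 9 * lam ^ 2 / κstar ^ 2 * hK
      _ ≤ 36 * lam ^ 2 * K / κstar ^ 2 := by gcongr; norm_num
  · calc ∑ j, |Δ j| = a + b := (sum_add_sum_compl _ _).symm
      _ ≤ 4 * (√(K : ℝ) * s) := by linarith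
      _ ≤ 4 * (√(K : ℝ) * (3 * lam * √(K : ℝ) / κstar ^ 2)) := by gcongr
      _ = 12 * lam * K / κstar ^ 2 := by linear_combination 12 * lam / κstar ^ 2 * hK
      _ ≤ 24 * lam * K / κstar ^ 2 := by gcongr; norm_num
end

section
/- Let X_1,…,X_T be i.i.d. random vectors in ℝ^m with ‖X_t‖_∞ ≤ L almost surely, let Σ = E[X_1 X_1ᵀ] and Σ̂ = (1/T)Σ_t X_t X_tᵀ. Fix S* ⊆ {1,…,m} with |S*| = K ≥ 1 and suppose: Σ_{jj} ≥ ν_min > 0 for all j; the population coherence μ(Σ) = max_{i≠j}|Σ_{ij}|/√(Σ_{ii}Σ_{jj}) satisfies μ(Σ) < 1/(4K); and the population restricted eigenvalue satisfies inf{ uᵀΣu/‖u_{S*}‖₂² : u ≠ 0, ‖u_{(S*)ᶜ}‖₁ ≤ 3‖u_{S*}‖₁ } ≥ κ_Σ² > 0. Then there exist constants C₀, c₇, c₈ > 0 depending only on L, ν_min, μ(Σ), and κ_Σ such that if T ≥ C₀ K² log m, then with probability at least 1 − c₇ m^{−c₈} the following hold simultaneously: (i) the empirical coherence μ(Σ̂)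 = max_{i≠j}|Σ̂_{ij}|/√(Σ̂_{ii}Σ̂_{jj}) satisfies μ(Σ̂) < 1/(2K−1); and (ii) inf{ uᵀΣ̂u/‖u_{S*}‖₂² : u ≠ 0, ‖u_{(S*)ᶜ}‖₁ ≤ 3‖u_{S*}‖₁ } ≥ κ_Σ²/2. -/
/-!
Each entry of `Σ̂` is the average of `T` independent copies of a variable bounded by `L²` with
mean `Σᵢⱼ`, so by Hoeffding it deviates from `Σᵢⱼ` by at least `ε` with probability at most
`2 exp (-T ε² / (2 L⁴))`; a union bound over the `m²` entries with `ε = c / K` and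
`T ≥ C₀ K² log m` makes all entries `ε`-close with probability at least `1 - 2 / m`.
On that event both conclusions are deterministic. The diagonal moves by a relative error at most
`1 / (16 K)` and the off-diagonal entries by at most `ν_min / (16 K)`, which turns
`μ(Σ) < 1 / (4K)` into `μ(Σ̂) < 5 / (16 K - 1) ≤ 1 / (2K - 1)`. On the cone,
`‖u‖₁ ≤ 4 ‖u_S‖₁ ≤ 4 √K ‖u_S‖₂`, so the quadratic form moves by at most
`ε ‖u‖₁² ≤ 16 K ε ‖u_S‖₂² ≤ κ² ‖u_S‖₂² / 2`.
-/

open MeasureTheory ProbabilityTheory Finset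

section Hoeffding

variable {Ω ι : Type*} [MeasurableSpace Ω] {μ : Measure Ω} [IsProbabilityMeasure μ]

theorem measureReal_le_abs_sum_sub_integral_le {X : ι → Ω → ℝ} {s : Finset ι} {a b ε : ℝ}
    (h_indep : iIndepFun X μ) (hX : ∀ i, AEMeasurable (X i) μ)
    (hab : ∀ i, ∀ᵐ ω ∂μ, X i ω ∈ Set.Icc a b) (hε : 0 ≤ ε) :
    μ.real {ω | ε ≤ |∑ i ∈ s, (X i ω - μ[X i])|} ≤
      2 * Real.exp (-ε ^ 2 / (2 * (#s * ((b - a) / 2) ^ 2))) := by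
  set Y : ι → Ω → ℝ := fun i ω => X i ω - μ[X i]
  have hY_indep : iIndepFun Y μ :=
    h_indep.comp (fun i (x : ℝ) => x - ∫ ω, X i ω ∂μ) fun _ => measurable_id.sub_const _
  have hY : ∀ i ∈ s, HasSubgaussianMGF (Y i) ((‖b - a‖₊ / 2) ^ 2) μ :=
    fun i _ => hasSubgaussianMGF_of_mem_Icc (hX i) (hab i)
  have hc : ((∑ _i ∈ s, (‖b - a‖₊ / 2) ^ 2 : NNReal) : ℝ) = #s * ((b - a) / 2) ^ 2 := by
    simp [div_pow]
  have h_upper := HasSubgaussianMGF.measure_sum_ge_le_of_iIndepFun hY_indep hY hε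
  have h_lower := HasSubgaussianMGF.measure_sum_ge_le_of_iIndepFun
    (hY_indep.comp (fun _ => Neg.neg) fun _ => measurable_neg) (fun i hi => (hY i hi).neg) hε
  rw [hc] at h_upper h_lower
  calc μ.real {ω | ε ≤ |∑ i ∈ s, Y i ω|}
      ≤ μ.real ({ω | ε ≤ ∑ i ∈ s, Y i ω} ∪ {ω | ε ≤ ∑ i ∈ s, (Neg.neg ∘ Y i) ω}) := by
        refine measureReal_mono fun ω hω => ?_
        simpa [le_abs] using hω
    _ ≤ _ := (measureReal_union_le _ _).trans (by linarith)

end Hoeffding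

section RestrictedEigenvalue

variable {n : Type*} [Fintype n]

theorem abs_sum_sum_mul_mul_le {A : Matrix n n ℝ} {ε : ℝ} (hA : ∀ i j, |A i j| ≤ ε)
    (u : n → ℝ) : |∑ i, ∑ j, u i * A i j * u j| ≤ ε * (∑ i, |u i|) ^ 2 :=
  calc |∑ i, ∑ j, u i * A i j * u j| ≤ ∑ i, ∑ j, |u i| * ε * |u j| := by
        refine (abs_sum_le_sum_abs _ _).trans (sum_le_sum fun i _ => ?_)
        refine (abs_sum_le_sum_abs _ _).trans (sum_le_sum fun j _ => ?_)
        rw [abs_mul, abs_mul]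
        gcongr
        exact hA i j
    _ = ε * (∑ i, |u i|) ^ 2 := by
        rw [sq, sum_mul_sum, mul_sum]
        simp only [mul_sum]
        exact sum_congr rfl fun i _ => sum_congr rfl fun j _ => by ring

variable [DecidableEq n]

theorem sq_sum_abs_le_of_sum_compl_le {S : Finset n} {u : n → ℝ}
    (hu : ∑ j ∈ Sᶜ, |u j| ≤ 3 * ∑ j ∈ S, |u j|) :
    (∑ j, |u j|) ^ 2 ≤ 16 * #S * ∑ j ∈ S, u j ^ 2 := by
  have hl1 : ∑ j, |u j| ≤ 4 * ∑ j ∈ S, |u j| := by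
    rw [← sum_add_sum_compl S]; linarith
  have hCS : (∑ j ∈ S, |u j|) ^ 2 ≤ #S * ∑ j ∈ S, u j ^ 2 := by
    simpa only [sq_abs] using sq_sum_le_card_mul_sum_sq (s := S) (f := fun j => |u j|)
  nlinarith [pow_le_pow_left₀ (sum_nonneg fun j _ => abs_nonneg (u j)) hl1 2]

theorem le_sum_sum_mul_mul_of_abs_sub_le {S : Finset n} {Sig H : Matrix n n ℝ} {κ ε : ℝ}
    (hε : 0 ≤ ε) (hεκ : 32 * #S * ε ≤ κ) (hHS : ∀ i j, |H i j - Sig i j| ≤ ε) {u : n → ℝ}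
    (hu : ∑ j ∈ Sᶜ, |u j| ≤ 3 * ∑ j ∈ S, |u j|)
    (hre : κ * ∑ j ∈ S, u j ^ 2 ≤ ∑ i, ∑ j, u i * Sig i j * u j) :
    κ / 2 * ∑ j ∈ S, u j ^ 2 ≤ ∑ i, ∑ j, u i * H i j * u j := by
  have hsplit : ∑ i, ∑ j, u i * H i j * u j =
      ∑ i, ∑ j, u i * Sig i j * u j + ∑ i, ∑ j, u i * (H - Sig) i j * u j := by
    simp only [← sum_add_distrib, Matrix.sub_apply]
    exact sum_congr rfl fun i _ => sum_congr rfl fun j _ => by ring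
  have hpert := abs_le.mp (abs_sum_sum_mul_mul_le (A := H - Sig) hHS u)
  have hcone := mul_le_mul_of_nonneg_left (sq_sum_abs_le_of_sum_compl_le hu) hε
  have hA : 0 ≤ ∑ j ∈ S, u j ^ 2 := sum_nonneg fun j _ => sq_nonneg (u j)
  nlinarith

end RestrictedEigenvalue

theorem abs_div_sqrt_mul_lt_of_abs_sub_le {n : Type*} {S H : Matrix n n ℝ} {k ν ε : ℝ} {i j : n}
    (hk : 1 ≤ k) (hν : 0 < ν) (hε : 16 * k * ε ≤ ν) (hi : ν ≤ S i i) (hj : ν ≤ S j j)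
    (hS : |S i j| / √(S i i * S j j) < 1 / (4 * k)) (hHS : ∀ p q, |H p q - S p q| ≤ ε) :
    |H i j| / √(H i i * H j j) < 1 / (2 * k - 1) := by
  set δ : ℝ := 1 / (16 * k)
  set s : ℝ := √(S i i * S j j)
  have hδ : 0 < δ := by positivity
  have hδ1 : δ < 1 := by rw [div_lt_one (by positivity)]; linarith
  have hεδ : ε ≤ δ * ν := by rw [div_mul_eq_mul_div, le_div_iff₀ (by positivity)]; linarith
  have hνs : ν ≤ s := Real.le_sqrt_of_sq_le (by nlinarith)
  have hs : 0 < s := hν.trans_le hνs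
  have hnum : |H i j| < 5 * δ * s := by
    have hSij : |S i j| < s / (4 * k) := by
      rwa [div_lt_iff₀ hs, one_div_mul_eq_div] at hS
    have : s / (4 * k) = 4 * δ * s := by simp only [δ]; field_simp; ring
    linarith [abs_sub_abs_le_abs_sub (H i j) (S i j), hHS i j, mul_le_mul_of_nonneg_left hνs hδ.le]
  have hden : (1 - δ) * s ≤ √(H i i * H j j) := by
    have hii : (1 - δ) * S i i ≤ H i i := by
      nlinarith [(abs_le.mp (hHS i i)).1, mul_le_mul_of_nonneg_left hi hδ.le]
    have hjj : (1 - δ) * S j j ≤ H j j := by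
      nlinarith [(abs_le.mp (hHS j j)).1, mul_le_mul_of_nonneg_left hj hδ.le]
    calc (1 - δ) * s = √(((1 - δ) * S i i) * ((1 - δ) * S j j)) := by
          rw [show ((1 - δ) * S i i) * ((1 - δ) * S j j) = (1 - δ) ^ 2 * (S i i * S j j) by ring,
            Real.sqrt_mul (by positivity), Real.sqrt_sq (by linarith)]
      _ ≤ √(H i i * H j j) :=
          Real.sqrt_le_sqrt (mul_le_mul hii hjj (by nlinarith) (by nlinarith))
  have hden_pos : 0 < (1 - δ) * s := mul_pos (by linarith) hs
  calc |H i j| / √(H i i * H j j) < 5 * δ * s / ((1 - δ) * s) :=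
        div_lt_div₀ hnum hden (by positivity) hden_pos
    _ = 5 / (16 * k - 1) := by simp only [δ]; field_simp
    _ ≤ 1 / (2 * k - 1) := by
        rw [div_le_div_iff₀ (by linarith) (by linarith)]; linarith

theorem ofReal_one_sub_measureReal_le {Ω : Type*} [MeasurableSpace Ω] {μ : Measure Ω}
    [IsProbabilityMeasure μ] {s t : Set Ω} (h : sᶜ ⊆ t) :
    ENNReal.ofReal (1 - μ.real s) ≤ μ t := by
  rw [← ofReal_measureReal]
  refine ENNReal.ofReal_le_ofReal ?_
  have : μ.real Set.univ ≤ μ.real s + μ.real t :=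
    (measureReal_mono fun ω _ => (em (ω ∈ s)).imp id (h ·)).trans (measureReal_union_le s t)
  rw [probReal_univ] at this
  linarith

theorem sq_mul_exp_neg_le_inv {x y : ℝ} (hy : 0 < y) (h : 3 * Real.log y ≤ x) :
    y ^ 2 * Real.exp (-x) ≤ y⁻¹ :=
  calc y ^ 2 * Real.exp (-x) ≤ y ^ 2 * Real.exp (-Real.log (y ^ 3)) := by
        rw [Real.log_pow]; gcongr; push_cast; linarith
    _ = y⁻¹ := by rw [Real.exp_neg, Real.exp_log (by positivity)]; field_simp

section SampleSecondMoment

variable {Ω : Type*} [MeasurableSpace Ω] {Pr : Measure Ω} [IsProbabilityMeasure Pr]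
  {T m : ℕ} {X : Fin T → Ω → Fin m → ℝ} {Sig : Matrix (Fin m) (Fin m) ℝ} {L ε : ℝ}

noncomputable def sampleSecondMoment (X : Fin T → Ω → Fin m → ℝ) (ω : Ω) :
    Matrix (Fin m) (Fin m) ℝ :=
  Matrix.of fun i j => (1 / (T : ℝ)) * ∑ t, X t ω i * X t ω j

theorem measureReal_le_abs_sampleSecondMoment_sub_le (hT : 0 < T) (hX : ∀ t, Measurable (X t))
    (h_indep : iIndepFun X Pr) (hXL : ∀ t, ∀ᵐ ω ∂Pr, ∀ i, |X t ω i| ≤ L)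
    (hSig : ∀ t i j, Sig i j = ∫ ω, X t ω i * X t ω j ∂Pr) (hε : 0 ≤ ε) (i j : Fin m) :
    Pr.real {ω | ε ≤ |sampleSecondMoment X ω i j - Sig i j|} ≤
      2 * Real.exp (-(T * ε ^ 2 / (2 * L ^ 4))) := by
  have hT' : (0 : ℝ) < T := by exact_mod_cast hT
  set Z : Fin T → Ω → ℝ := fun t ω => X t ω i * X t ω j
  have hZ_indep : iIndepFun Z Pr :=
    h_indep.comp (fun _ v => v i * v j) fun _ => (measurable_pi_apply i).mul (measurable_pi_apply j)
  have hZ : ∀ t, AEMeasurable (Z t) Pr := fun t =>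
    ((measurable_pi_apply i).comp (hX t)).mul ((measurable_pi_apply j).comp (hX t)) |>.aemeasurable
  have hZL : ∀ t, ∀ᵐ ω ∂Pr, Z t ω ∈ Set.Icc (-L ^ 2) (L ^ 2) := fun t => by
    filter_upwards [hXL t] with ω hω
    rw [Set.mem_Icc, ← abs_le, abs_mul, sq]
    exact mul_le_mul (hω i) (hω j) (abs_nonneg _) ((abs_nonneg _).trans (hω i))
  have h := measureReal_le_abs_sum_sub_integral_le (s := univ) hZ_indep hZ hZL
    (mul_nonneg hT'.le hε)
  have hset : {ω | ε ≤ |sampleSecondMoment X ω i j - Sig i j|} =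
      {ω | T * ε ≤ |∑ t, (Z t ω - ∫ ω, Z t ω ∂Pr)|} := by
    ext ω
    simp only [Set.mem_ofPred_eq, sampleSecondMoment, Matrix.of_apply, Z, ← hSig, sum_sub_distrib,
      sum_const, card_univ, Fintype.card_fin, nsmul_eq_mul]
    rw [← mul_le_mul_iff_of_pos_left hT', ← abs_of_pos hT', ← abs_mul, abs_of_pos hT']
    congr! 2
    field_simp
  rw [hset]
  convert h using 4
  simp only [card_univ, Fintype.card_fin]
  field_simp
  ring

theorem measureReal_exists_le_abs_sampleSecondMoment_sub_le (hT : 0 < T)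
    (hX : ∀ t, Measurable (X t)) (h_indep : iIndepFun X Pr)
    (hXL : ∀ t, ∀ᵐ ω ∂Pr, ∀ i, |X t ω i| ≤ L)
    (hSig : ∀ t i j, Sig i j = ∫ ω, X t ω i * X t ω j ∂Pr) (hε : 0 ≤ ε) :
    Pr.real {ω | ∃ i j, ε ≤ |sampleSecondMoment X ω i j - Sig i j|} ≤
      m ^ 2 * (2 * Real.exp (-(T * ε ^ 2 / (2 * L ^ 4)))) := by
  have hset : {ω | ∃ i j, ε ≤ |sampleSecondMoment X ω i j - Sig i j|} =
      ⋃ p : Fin m × Fin m, {ω | ε ≤ |sampleSecondMoment X ω p.1 p.2 - Sig p.1 p.2|} := by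
    ext ω; simp
  calc _ ≤ ∑ p : Fin m × Fin m, Pr.real {ω | ε ≤ |sampleSecondMoment X ω p.1 p.2 - Sig p.1 p.2|} :=
        hset ▸ measureReal_iUnion_fintype_le _
    _ ≤ ∑ _p : Fin m × Fin m, 2 * Real.exp (-(T * ε ^ 2 / (2 * L ^ 4))) :=
        sum_le_sum fun p _ =>
          measureReal_le_abs_sampleSecondMoment_sub_le hT hX h_indep hXL hSig hε p.1 p.2
    _ = _ := by simp [sq]

theorem measureReal_exists_le_abs_sampleSecondMoment_sub_le_two_mul_inv (hm : 0 < m) (hL : 0 < L)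
    (hT : 0 < T) (hX : ∀ t, Measurable (X t)) (h_indep : iIndepFun X Pr)
    (hXL : ∀ t, ∀ᵐ ω ∂Pr, ∀ i, |X t ω i| ≤ L)
    (hSig : ∀ t i j, Sig i j = ∫ ω, X t ω i * X t ω j ∂Pr) (hε : 0 ≤ ε)
    (hTε : 6 * L ^ 4 * Real.log m ≤ T * ε ^ 2) :
    Pr.real {ω | ∃ i j, ε ≤ |sampleSecondMoment X ω i j - Sig i j|} ≤ 2 * (m : ℝ)⁻¹ := by
  have hexp : 3 * Real.log m ≤ T * ε ^ 2 / (2 * L ^ 4) := by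
    rw [le_div_iff₀ (by positivity)]; linarith
  calc _ ≤ (m : ℝ) ^ 2 * (2 * Real.exp (-(T * ε ^ 2 / (2 * L ^ 4)))) :=
        measureReal_exists_le_abs_sampleSecondMoment_sub_le hT hX h_indep hXL hSig hε
    _ = 2 * ((m : ℝ) ^ 2 * Real.exp (-(T * ε ^ 2 / (2 * L ^ 4)))) := mul_left_comm _ _ _
    _ ≤ 2 * (m : ℝ)⁻¹ := by gcongr; exact sq_mul_exp_neg_le_inv (by positivity) hexp

end SampleSecondMoment

theorem stmt13 (L νmin kS : ℝ) (hL : 0 < L) (hν : 0 < νmin) (hκ : 0 < kS) :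
    ∃ C₀ c₇ c₈ : ℝ, 0 < C₀ ∧ 0 < c₇ ∧ 0 < c₈ ∧
      ∀ (T m K : ℕ), 1 ≤ K →
      ∀ (Ω : Type) (_ : MeasurableSpace Ω) (Pr : Measure Ω),
        IsProbabilityMeasure Pr →
      ∀ (X : Fin T → Ω → Fin m → ℝ) (Sstar : Finset (Fin m))
        (Sig : Matrix (Fin m) (Fin m) ℝ),
        Sstar.card = K →
        (∀ t, Measurable (X t)) →
        -- the episodes are i.i.d. ...
        iIndepFun X Pr →
        (∀ t t', Measure.map (X t) Pr = Measure.map (X t') Pr) →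
        -- ... bounded by `L` in sup-norm almost surely
        (∀ t, ∀ᵐ ω ∂Pr, ∀ i, |X t ω i| ≤ L) →
        -- `Sig = E[X₁ X₁ᵀ]`
        (∀ t i j, Sig i j = ∫ ω, X t ω i * X t ω j ∂Pr) →
        -- diagonal bounded away from zero
        (∀ j, νmin ≤ Sig j j) →
        -- population coherence `μ(Σ) < 1/(4K)`
        (∀ i j, i ≠ j →
          |Sig i j| / Real.sqrt (Sig i i * Sig j j) < 1 / (4 * (K : ℝ))) →
        -- population restricted eigenvalue `≥ kS²` on the cone of order 3 over `S*`
        (∀ u : Fin m → ℝ,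
          (∑ j ∈ Sstarᶜ, |u j|) ≤ 3 * ∑ j ∈ Sstar, |u j| →
          kS ^ 2 * (∑ j ∈ Sstar, u j ^ 2) ≤ ∑ i, ∑ j, u i * Sig i j * u j) →
        -- sample size `T ≥ C₀ K² log m`
        (C₀ * ((K : ℝ) ^ 2 * Real.log m) ≤ (T : ℝ)) →
        ENNReal.ofReal (1 - c₇ * (m : ℝ) ^ (-c₈)) ≤
          Pr {ω |
            -- (i) empirical coherence `μ(Σ̂) < 1/(2K−1)`
            (∀ i j, i ≠ j →
              |(1 / (T : ℝ)) * ∑ t, X t ω i * X t ω j| /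
                  Real.sqrt (((1 / (T : ℝ)) * ∑ t, X t ω i * X t ω i) *
                    ((1 / (T : ℝ)) * ∑ t, X t ω j * X t ω j))
                < 1 / (2 * (K : ℝ) - 1)) ∧
            -- (ii) empirical restricted eigenvalue `≥ kS²/2`
            (∀ u : Fin m → ℝ,
              (∑ j ∈ Sstarᶜ, |u j|) ≤ 3 * ∑ j ∈ Sstar, |u j| →
              kS ^ 2 / 2 * (∑ j ∈ Sstar, u j ^ 2)
                ≤ ∑ i, ∑ j, u i * ((1 / (T : ℝ)) * ∑ t, X t ω i * X t ω j) * u j)} := by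
  set c := min (νmin / 16) (kS ^ 2 / 32)
  have hc : 0 < c := lt_min (by positivity) (by positivity)
  refine ⟨6 * L ^ 4 / c ^ 2, 2, 1, by positivity, two_pos, one_pos, ?_⟩
  intro T m K hK Ω _ Pr _ X Sstar Sig hcard hX h_indep _ hXL hSig hdiag hcoh hre hT
  have hKm : K ≤ m := hcard ▸ (card_le_univ Sstar).trans_eq (Fintype.card_fin m)
  obtain rfl | hm : m = 1 ∨ 2 ≤ m := by omega
  · exact (ENNReal.ofReal_of_nonpos (by norm_num)).trans_le zero_le
  have hK' : (1 : ℝ) ≤ K := by exact_mod_cast hK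
  have hlog : 0 < Real.log m := Real.log_pos (by exact_mod_cast hm)
  have hT0 : 0 < T := by
    have : (0 : ℝ) < T := lt_of_lt_of_le (by positivity) hT
    exact_mod_cast this
  set ε := c / K
  have hε : 0 < ε := by positivity
  have hKε : K * ε = c := mul_div_cancel₀ c (by positivity)
  have hTε : 6 * L ^ 4 * Real.log m ≤ T * ε ^ 2 :=
    calc 6 * L ^ 4 * Real.log m = 6 * L ^ 4 / c ^ 2 * (K ^ 2 * Real.log m) * ε ^ 2 := by
          rw [← hKε]; field_simp
      _ ≤ T * ε ^ 2 := by gcongr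
  have hbad := measureReal_exists_le_abs_sampleSecondMoment_sub_le_two_mul_inv (by omega) hL hT0
    hX h_indep hXL hSig hε.le hTε
  refine (ENNReal.ofReal_le_ofReal ?_).trans (ofReal_one_sub_measureReal_le
    (s := {ω | ∃ i j, ε ≤ |sampleSecondMoment X ω i j - Sig i j|}) ?_)
  · rw [Real.rpow_neg_one]; linarith
  intro ω hω
  simp only [Set.mem_compl_iff, Set.mem_ofPred_eq, not_exists, not_le] at hω
  have hdev : ∀ i j, |sampleSecondMoment X ω i j - Sig i j| ≤ ε := fun i j => (hω i j).le
  exact ⟨fun i j hij => abs_div_sqrt_mul_lt_of_abs_sub_le hK' hν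
      (by linarith [min_le_left (νmin / 16) (kS ^ 2 / 32)]) (hdiag i) (hdiag j) (hcoh i j hij) hdev,
    fun u hu => le_sum_sum_mul_mul_of_abs_sub_le hε.le
      (by rw [hcard]; linarith [min_le_right (νmin / 16) (kS ^ 2 / 32)]) hdev hu (hre u hu)⟩
end

section
/- Let n be a binomial random variable with parameters T ∈ ℕ and p ∈ (0,1], and suppose Tp ≥ 2. Then E[ (1/n)·1{n > 0} ] ≥ 1/(2Tp). -/
/-!
By Cauchy–Schwarz applied to the weights `P(n = k)` on `k ≥ 1`,
`P(n > 0)² ≤ E[n] · E[1{n > 0} / n] = Tp · E[1{n > 0} / n]`.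
Since `(1 - p)^T ≤ e^{-Tp} ≤ e^{-2} < 1/4`, we have `P(n > 0) ≥ 3/4`, and `(3/4)² > 1/2`.
-/

open Finset Real

theorem sum_range_mul_choose_mul_pow_mul_pow {R : Type*} [CommSemiring R] (x y : R) (n : ℕ) :
    ∑ k ∈ range (n + 2), (k : R) * ((n + 1).choose k * x ^ k * y ^ (n + 1 - k))
      = (n + 1) * x * (x + y) ^ n := by
  rw [sum_range_succ', add_pow, mul_sum]
  simp only [Nat.cast_zero, zero_mul, add_zero]
  refine sum_congr rfl fun k hk => ?_
  have hchoose : ((n + 1 : ℕ) : R) * n.choose k = (n + 1).choose (k + 1) * ((k + 1 : ℕ) : R) := by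
    rw [← Nat.cast_mul, ← Nat.cast_mul, Nat.add_one_mul_choose_eq]
  have hexp : n + 1 - (k + 1) = n - k := by omega
  calc ((k + 1 : ℕ) : R) * ((n + 1).choose (k + 1) * x ^ (k + 1) * y ^ (n + 1 - (k + 1)))
      = ((n + 1).choose (k + 1) * ((k + 1 : ℕ) : R)) * x * (x ^ k * y ^ (n - k)) := by
        rw [hexp, pow_succ]; ring
    _ = (n + 1) * x * (x ^ k * y ^ (n - k) * n.choose k) := by
        rw [← hchoose]; push_cast; ring

noncomputable def binomialWeight (T : ℕ) (p : ℝ) (k : ℕ) : ℝ :=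
  T.choose k * p ^ k * (1 - p) ^ (T - k)

theorem binomialWeight_nonneg {p : ℝ} (hp0 : 0 ≤ p) (hp1 : p ≤ 1) (T k : ℕ) :
    0 ≤ binomialWeight T p k := by
  have : 0 ≤ 1 - p := by linarith
  unfold binomialWeight; positivity

theorem binomialWeight_zero (T : ℕ) (p : ℝ) : binomialWeight T p 0 = (1 - p) ^ T := by
  simp [binomialWeight]

theorem sum_binomialWeight (T : ℕ) (p : ℝ) :
    ∑ k ∈ range (T + 1), binomialWeight T p k = 1 := by
  simp only [binomialWeight]
  calc ∑ k ∈ range (T + 1), (T.choose k : ℝ) * p ^ k * (1 - p) ^ (T - k)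
      = (p + (1 - p)) ^ T := by rw [add_pow]; exact sum_congr rfl fun k _ => by ring
    _ = 1 := by norm_num

theorem sum_mul_binomialWeight (T : ℕ) (p : ℝ) :
    ∑ k ∈ range (T + 1), k * binomialWeight T p k = T * p := by
  cases T with
  | zero => simp
  | succ n =>
    simp only [binomialWeight]
    rw [sum_range_mul_choose_mul_pow_mul_pow]
    push_cast
    ring

theorem one_sub_pow_le_exp_neg_mul {p : ℝ} (hp1 : p ≤ 1) (T : ℕ) :
    (1 - p) ^ T ≤ exp (-(T * p)) := by
  rw [← mul_neg, exp_nat_mul]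
  exact pow_le_pow_left₀ (by linarith) (one_sub_le_exp_neg p) T

theorem sq_sum_le_sum_mul_mul_sum_div {ι : Type*} (s : Finset ι) {w x : ι → ℝ}
    (hw : ∀ i ∈ s, 0 ≤ w i) (hx : ∀ i ∈ s, 0 < x i) :
    (∑ i ∈ s, w i) ^ 2 ≤ (∑ i ∈ s, x i * w i) * ∑ i ∈ s, w i / x i :=
  sum_sq_le_sum_mul_sum_of_sq_le_mul s
    (fun i hi => mul_nonneg (hx i hi).le (hw i hi))
    (fun i hi => div_nonneg (hw i hi) (hx i hi).le)
    (fun i hi => le_of_eq (by field_simp [(hx i hi).ne']))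

theorem sum_Ico_binomialWeight (T : ℕ) (p : ℝ) :
    ∑ k ∈ Ico 1 (T + 1), binomialWeight T p k = 1 - (1 - p) ^ T := by
  have h := sum_binomialWeight T p
  rw [sum_range_eq_add_Ico _ T.succ_pos, binomialWeight_zero] at h
  linarith

theorem sum_Ico_mul_binomialWeight (T : ℕ) (p : ℝ) :
    ∑ k ∈ Ico 1 (T + 1), k * binomialWeight T p k = T * p := by
  rw [← sum_mul_binomialWeight T p, sum_range_eq_add_Ico _ T.succ_pos, Nat.cast_zero,
    zero_mul, zero_add]

theorem one_sub_pow_le_quarter {p : ℝ} (hp1 : p ≤ 1) {T : ℕ} (hTp : 2 ≤ (T : ℝ) * p) :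
    (1 - p) ^ T ≤ 1 / 4 := calc
  (1 - p) ^ T ≤ exp (-(T * p)) := one_sub_pow_le_exp_neg_mul hp1 T
  _ ≤ exp (-2) := by gcongr
  _ ≤ 1 / 4 := by
    rw [exp_neg, inv_eq_one_div]
    gcongr
    linarith [quadratic_le_exp_of_nonneg (zero_le_two : (0 : ℝ) ≤ 2)]

/-- If `n ~ Binomial(T, p)` with `Tp ≥ 2`, then `E[(1/n) · 1{n > 0}] ≥ 1/(2Tp)`.
The expectation is written out explicitly against the binomial distribution:
`P(n = k) = C(T, k) pᵏ (1-p)^{T-k}`. -/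
theorem stmt17
    (T : ℕ) (p : ℝ) (hp0 : 0 < p) (hp1 : p ≤ 1)
    (hTp : 2 ≤ (T : ℝ) * p) :
    1 / (2 * (T : ℝ) * p)
      ≤ ∑ k ∈ Finset.range (T + 1),
          (T.choose k : ℝ) * p ^ k * (1 - p) ^ (T - k)
            * (if 0 < k then 1 / (k : ℝ) else 0) := by
  let E := ∑ k ∈ Ico 1 (T + 1), binomialWeight T p k / k
  have hE : ∑ k ∈ range (T + 1), binomialWeight T p k * (if 0 < k then 1 / (k : ℝ) else 0)
      = E := by
    rw [sum_range_eq_add_Ico _ T.succ_pos]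
    simp only [lt_irrefl, if_false, mul_zero, zero_add]
    refine sum_congr rfl fun k hk => ?_
    rw [if_pos (show 0 < k from (mem_Ico.mp hk).1), mul_one_div]
  have hCS : (1 - (1 - p) ^ T) ^ 2 ≤ T * p * E := by
    rw [← sum_Ico_binomialWeight, ← sum_Ico_mul_binomialWeight]
    exact sq_sum_le_sum_mul_mul_sum_div _ (fun k _ => binomialWeight_nonneg hp0.le hp1 T k)
      fun k hk => by exact_mod_cast (mem_Ico.mp hk).1
  have hq := one_sub_pow_le_quarter hp1 hTp
  change 1 / (2 * (T : ℝ) * p) ≤ ∑ k ∈ range (T + 1), binomialWeight T p k * _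
  rw [hE, div_le_iff₀ (by linarith)]
  nlinarith
end
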